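/- Let R be a prime ring containing pairwise orthogonal idempotents e_1, …, e_n such that e_1 + ⋯ + e_n = 1 and each corner ring e_iRe_i (with unity e_i) is a division ring. Then R is isomorphic as a ring to the matrix ring M_n(e_1Re_1). -/

import Mathlib

/-!
Fix `e = d 0`. Primeness gives `x ∈ e R (d i)` and `y ∈ (d i) R e` with `x * y ≠ 0`, and since
both corners are division rings this yields `f i ∈ e R (d i)` and `g i ∈ (d i) R e` with
`f i * g i = e` and `g i * f i = d i`. These play the role of the matrix units `E₀ᵢ` and `Eᵢ₀`, so
`x ↦ (f i * x * g j)ᵢⱼ` is a ring isomorphism `R ≃+* Mₙ(eRe)` with inverse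
`M ↦ ∑ g i * M i j * f j`.
-/

/-- The additive subgroup underlying the corner ring `eRe`. -/
def cornerAddSubgroup {R : Type*} [Ring R] (e : R) : AddSubgroup R where
  carrier := {x | e * x * e = x}
  add_mem' := by intro a b ha hb; simp only [Set.mem_setOf_eq] at *; rw [mul_add, add_mul, ha, hb]
  zero_mem' := by simp
  neg_mem' := by intro a ha; simp only [Set.mem_setOf_eq] at *; rw [mul_neg, neg_mul, ha]

/-- The corner ring `eRe` associated with an idempotent `e` of a ring `R`:
its elements are the `x ∈ R` with `e * x * e = x`. -/
def Corner {R : Type*} [Ring R] (e : R) (_he : e * e = e) : Type _ :=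
  cornerAddSubgroup e

namespace Corner

variable {R : Type*} [Ring R] {e : R} {he : e * e = e}

theorem prop (a : Corner e he) : e * a.1 * e = a.1 := a.2

instance : AddCommGroup (Corner e he) :=
  inferInstanceAs (AddCommGroup (cornerAddSubgroup e))

theorem left_absorb (a : Corner e he) : e * a.1 = a.1 := by
  conv_lhs => rw [← prop a]
  rw [← mul_assoc, ← mul_assoc, he, prop a]

theorem right_absorb (a : Corner e he) : a.1 * e = a.1 := by
  conv_lhs => rw [← prop a]
  rw [mul_assoc, mul_assoc, he, ← mul_assoc, prop a]

instance instRing : Ring (Corner e he) :=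
  { (inferInstance : AddCommGroup (Corner e he)) with
    mul := fun a b => ⟨a.1 * b.1, by
      show e * (a.1 * b.1) * e = a.1 * b.1
      rw [mul_assoc, mul_assoc, right_absorb b, ← mul_assoc, left_absorb a]⟩
    one := ⟨e, by show e * e * e = e; rw [he, he]⟩
    mul_assoc := fun a b c => Subtype.ext (mul_assoc a.1 b.1 c.1)
    one_mul := fun a => Subtype.ext (left_absorb a)
    mul_one := fun a => Subtype.ext (right_absorb a)
    left_distrib := fun a b c => Subtype.ext (mul_add a.1 b.1 c.1)
    right_distrib := fun a b c => Subtype.ext (add_mul a.1 b.1 c.1)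
    zero_mul := fun a => Subtype.ext (zero_mul a.1)
    mul_zero := fun a => Subtype.ext (mul_zero a.1) }

@[simp] theorem val_mul (a b : Corner e he) : (a * b).1 = a.1 * b.1 := rfl
@[simp] theorem val_add (a b : Corner e he) : (a + b).1 = a.1 + b.1 := rfl
@[simp] theorem val_one : (1 : Corner e he).1 = e := rfl
@[simp] theorem val_zero : (0 : Corner e he).1 = 0 := rfl

end Corner

open Finset

namespace Corner

variable {R : Type*} [Ring R]

theorem val_sum {e : R} {he : e * e = e} {ι : Type*} (s : Finset ι) (F : ι → Corner e he) :
    (∑ i ∈ s, F i).1 = ∑ i ∈ s, (F i).1 :=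
  map_sum (AddMonoidHom.mk' (fun a : Corner e he => a.1) fun _ _ => rfl) F s

def ringEquivMatrixOfMatrixUnits {ι : Type*} [Fintype ι] (e : R) (he : e * e = e) (f g : ι → R)
    (hf : ∀ i, e * f i = f i) (hg : ∀ i, g i * e = g i)
    (hfg : ∀ i, f i * g i = e) (hfg_ne : ∀ i j, i ≠ j → f i * g j = 0)
    (hgf : ∑ i, g i * f i = 1) : R ≃+* Matrix ι ι (Corner e he) where
  toFun x := Matrix.of fun i j => ⟨f i * x * g j, by
    show e * (f i * x * g j) * e = f i * x * g j
    rw [← mul_assoc, ← mul_assoc, hf, mul_assoc, hg]⟩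
  invFun M := ∑ i, ∑ j, g i * (M i j).1 * f j
  left_inv x := by
    show ∑ i, ∑ j, g i * (f i * x * g j) * f j = x
    calc ∑ i, ∑ j, g i * (f i * x * g j) * f j
        = (∑ i, g i * f i) * x * ∑ j, g j * f j := by
          rw [sum_mul, sum_mul_sum]
          simp only [mul_assoc]
      _ = x := by rw [hgf, one_mul, mul_one]
  right_inv M := by
    classical
    ext i j
    refine Subtype.ext ?_
    show f i * (∑ k, ∑ l, g k * (M k l).1 * f l) * g j = (M i j).1
    have hfg_ite : ∀ k l, f k * g l = if k = l then e else 0 := by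
      intro k l
      split_ifs with hkl
      · exact hkl ▸ hfg k
      · exact hfg_ne k l hkl
    calc f i * (∑ k, ∑ l, g k * (M k l).1 * f l) * g j
        = ∑ k, ∑ l, (f i * g k) * (M k l).1 * (f l * g j) := by
          simp only [sum_mul, mul_sum, mul_assoc]
      _ = e * (M i j).1 * e := by
          simp only [hfg_ite, ite_mul, zero_mul, mul_ite, mul_zero, sum_ite_eq, mem_univ,
            if_true, sum_ite_eq']
      _ = (M i j).1 := (M i j).2
  map_mul' x y := by
    ext i j
    refine Subtype.ext ?_
    rw [Matrix.mul_apply, val_sum]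
    show f i * (x * y) * g j = ∑ k, f i * x * g k * (f k * y * g j)
    calc f i * (x * y) * g j = f i * (x * (∑ k, g k * f k) * y) * g j := by
          rw [hgf, mul_one]
      _ = ∑ k, f i * x * g k * (f k * y * g j) := by
          simp only [sum_mul, mul_sum, mul_assoc]
  map_add' x y := by
    ext i j
    refine Subtype.ext ?_
    show f i * (x + y) * g j = f i * x * g j + f i * y * g j
    rw [mul_add, add_mul]

end Corner

section PrimeRing

variable {R : Type*} [Ring R]

def IsDivisionCorner (e : R) : Prop :=
  ∀ x, e * x * e = x → x ≠ 0 → ∃ y, e * y * e = y ∧ x * y = e ∧ y * x = e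

theorem IsDivisionCorner.eq_of_isIdempotentElem {e s : R} (he : e * e = e)
    (hdiv : IsDivisionCorner e) (hs : e * s * e = s) (hs0 : s ≠ 0) (hss : s * s = s) :
    s = e := by
  obtain ⟨w, -, hsw, -⟩ := hdiv s hs hs0
  have hse : s * e = s := by rw [← hs, mul_assoc, he]
  calc s = s * (s * w) := by rw [hsw, hse]
    _ = e := by rw [← mul_assoc, hss, hsw]

theorem exists_mul_mul_ne_zero_of_prime
    (hprime : ∀ a b : R, (∀ x : R, a * x * b = 0) → a = 0 ∨ b = 0)
    {a b : R} (ha : a ≠ 0) (hb : b ≠ 0) : ∃ x, a * x * b ≠ 0 := by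
  by_contra! h
  exact (hprime a b h).elim ha hb

theorem exists_mul_ne_zero_of_prime
    (hprime : ∀ a b : R, (∀ x : R, a * x * b = 0) → a = 0 ∨ b = 0)
    {e e' : R} (he : e * e = e) (he' : e' * e' = e') (he0 : e ≠ 0) (he0' : e' ≠ 0) :
    ∃ x y, e * x = x ∧ x * e' = x ∧ e' * y = y ∧ y * e = y ∧ x * y ≠ 0 := by
  obtain ⟨a, hx0⟩ := exists_mul_mul_ne_zero_of_prime hprime he0 he0'
  have hex : e * (e * a * e') = e * a * e' := by simp only [← mul_assoc, he]
  have hxe : e * a * e' * e' = e * a * e' := by simp only [mul_assoc, he']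
  generalize e * a * e' = x at hx0 hex hxe
  obtain ⟨b, hxbx⟩ := exists_mul_mul_ne_zero_of_prime hprime hx0 hx0
  refine ⟨x, e' * b * e, hex, hxe, by simp only [← mul_assoc, he'], by
    simp only [mul_assoc, he], fun hxy => hxbx ?_⟩
  calc x * b * x = x * (e' * b * e) * x := by
        rw [← mul_assoc, ← mul_assoc, hxe, mul_assoc (x * b), hex]
    _ = 0 := by rw [hxy, zero_mul]

/-- With `z` the inverse of `x * y` in `eRe`, take `F = x`, `G = y * z`: then `G * F` is a
nonzero idempotent of the division ring `e'Re'`, hence equals `e'`. -/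
theorem exists_mul_eq_of_isDivisionCorner {e e' x y : R} (he : e * e = e) (he' : e' * e' = e')
    (hdiv : IsDivisionCorner e) (hdiv' : IsDivisionCorner e')
    (hex : e * x = x) (hxe : x * e' = x) (hey : e' * y = y) (hye : y * e = y)
    (hxy : x * y ≠ 0) :
    ∃ F G, e * F = F ∧ F * e' = F ∧ e' * G = G ∧ G * e = G ∧ F * G = e ∧ G * F = e' := by
  obtain ⟨z, hz, hxyz, -⟩ := hdiv (x * y) (by rw [← mul_assoc, hex, mul_assoc, hye]) hxy
  have hze : z * e = z := by rw [← hz, mul_assoc, he]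
  have hFG : x * (y * z) = e := by rw [← mul_assoc, hxyz]
  have hFGF : x * (y * z * x) = x := by rw [← mul_assoc, hFG, hex]
  refine ⟨x, y * z, hex, hxe, by rw [← mul_assoc, hey], by rw [mul_assoc, hze], hFG, ?_⟩
  refine hdiv'.eq_of_isIdempotentElem he' ?_ ?_ ?_
  · rw [← mul_assoc, ← mul_assoc, hey, mul_assoc _ x, hxe]
  · rintro h
    exact hxy (by rw [← hFGF, h, mul_zero, zero_mul])
  · rw [mul_assoc, hFGF]

end PrimeRing

/-- If a prime ring `R` contains pairwise orthogonal idempotents `d i` (`i : Fin n`)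
whose sum is `1` and such that each corner ring `(d i) R (d i)` is a division ring
(nonzero, and every nonzero element has a two-sided inverse with respect to the unity
`d i`), then `R ≅ Mₙ((d 0) R (d 0))`. -/
theorem ringEquiv_matrix_of_division_corners (R : Type*) [Ring R]
    (hprime : ∀ a b : R, (∀ x : R, a * x * b = 0) → a = 0 ∨ b = 0)
    (n : ℕ) (hn : 0 < n) (d : Fin n → R)
    (hidem : ∀ i, d i * d i = d i)
    (horth : ∀ i j, i ≠ j → d i * d j = 0)
    (hsum : ∑ i, d i = 1)
    (hne : ∀ i, d i ≠ 0)
    (hdiv : ∀ (i : Fin n) (x : R), d i * x * d i = x → x ≠ 0 →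
      ∃ y : R, d i * y * d i = y ∧ x * y = d i ∧ y * x = d i) :
    Nonempty (R ≃+* Matrix (Fin n) (Fin n) (Corner (d ⟨0, hn⟩) (hidem ⟨0, hn⟩))) := by
  have hunits : ∀ i, ∃ F G, d ⟨0, hn⟩ * F = F ∧ F * d i = F ∧ d i * G = G ∧
      G * d ⟨0, hn⟩ = G ∧ F * G = d ⟨0, hn⟩ ∧ G * F = d i := fun i => by
    obtain ⟨x, y, hex, hxe, hey, hye, hxy⟩ :=
      exists_mul_ne_zero_of_prime hprime (hidem _) (hidem i) (hne _) (hne i)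
    exact exists_mul_eq_of_isDivisionCorner (hidem _) (hidem i) (hdiv _) (hdiv i)
      hex hxe hey hye hxy
  choose f g hf hfd hdg hg hfg hgf using hunits
  have hfg_ne : ∀ i j, i ≠ j → f i * g j = 0 := fun i j hij => by
    rw [← hfd i, ← hdg j, mul_assoc, ← mul_assoc (d i), horth i j hij, zero_mul, mul_zero]
  exact ⟨Corner.ringEquivMatrixOfMatrixUnits _ _ f g hf hg hfg hfg_ne
    (by simp only [hgf, hsum])⟩
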